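/- arXiv:1601.00198 — 5 statements merged into one kernel-verified Lean document; each statement's English description precedes it below -/
import Mathlib

section
/- For any packing integer program (P), any partition J = {J_1,…,J_q} of the column index set [n] of A, and any support list 𝒱 of subsets of the vertex set of the packing interaction graph G = G^{pack}_{A,J}, the optimum over the column block-sparse closure satisfies z^{𝒱,P} ≤ η^𝒱(G) · z^I, where η^𝒱(G) is the fractional mixed chromatic number of G with respect to 𝒱. -/
/-! Fix a mixed stable set `M` subordinate to `𝒱`. For each `s ∈ M`, the restriction of `c`
to the columns of `s` is supported inside a member of `𝒱`, so on those columns a point `x` of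
`P^{𝒱,P}` is matched, up to `ε`, by some feasible point `x_s`. Since no row of `A` meets two
members of `M`, the point equal to `x_s` on the columns of each `s ∈ M` and to `0` elsewhere is
again feasible; hence the part of `cᵀx` carried by the blocks covered by `M` is at most `z^I`.
Summing these bounds with the weights of a fractional cover `y` gives `cᵀx ≤ (Σ_M y_M) z^I`. -/

open Finset

/-- The dot product `cᵀx` of two vectors in `ℚⁿ`. -/
def dotp {n : ℕ} (c x : Fin n → ℚ) : ℚ := ∑ j, c j * x j

/-- The feasible region `P` of the MILP `Ax ≤ b`, `x ≥ 0`, `x_j ∈ ℤ` for `j ∈ L`. -/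
def mipSet {m n : ℕ} (A : Matrix (Fin m) (Fin n) ℚ) (b : Fin m → ℚ)
    (L : Finset (Fin n)) : Set (Fin n → ℚ) :=
  {x | (∀ i, ∑ j, A i j * x j ≤ b i) ∧ (∀ j, 0 ≤ x j) ∧ ∀ j ∈ L, ∃ z : ℤ, x j = (z : ℚ)}

/-- The LP relaxation `P^LP`. -/
def lpSet {m n : ℕ} (A : Matrix (Fin m) (Fin n) ℚ) (b : Fin m → ℚ) : Set (Fin n → ℚ) :=
  {x | (∀ i, ∑ j, A i j * x j ≤ b i) ∧ (∀ j, 0 ≤ x j)}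

/-- The integer hull `P^I = conv(P)`. -/
def intHull {m n : ℕ} (A : Matrix (Fin m) (Fin n) ℚ) (b : Fin m → ℚ)
    (L : Finset (Fin n)) : Set (Fin n → ℚ) :=
  convexHull ℚ (mipSet A b L)

/-- The sparse closure `P^(N)`: the LP relaxation intersected with all halfspaces
`αᵀx ≤ β` that are valid for `P^I` and whose support is contained in `N`. -/
def sparseClosure {m n : ℕ} (A : Matrix (Fin m) (Fin n) ℚ) (b : Fin m → ℚ)
    (L : Finset (Fin n)) (N : Set (Fin n)) : Set (Fin n → ℚ) :=
  lpSet A b ∩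
    ⋂ (α : Fin n → ℚ) (β : ℚ)
      (_ : (∀ x ∈ intHull A b L, dotp α x ≤ β) ∧ ∀ j, α j ≠ 0 → j ∈ N),
      {x | dotp α x ≤ β}

/-- The packing interaction graph of `A` w.r.t. the partition of columns given by
`π : Fin n → Fin q` (part `J_u = π⁻¹(u)`): nodes `u ≠ v` are adjacent iff some row of `A`
has nonzero entries in a column of `J_u` and in a column of `J_v`. -/
def packGraph {m n q : ℕ} (A : Matrix (Fin m) (Fin n) ℚ) (π : Fin n → Fin q) :
    SimpleGraph (Fin q) where
  Adj u v := u ≠ v ∧ ∃ i a₁ a₂, π a₁ = u ∧ π a₂ = v ∧ A i a₁ ≠ 0 ∧ A i a₂ ≠ 0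
  symm := by
    constructor
    rintro u v ⟨huv, i, a₁, a₂, h1, h2, h3, h4⟩
    exact ⟨huv.symm, i, a₂, a₁, h2, h1, h4, h3⟩
  loopless := by
    constructor
    rintro u ⟨h, -⟩
    exact h rfl

/-- The sparse closure `P^(S)` for a set `S` of nodes of the packing interaction graph. -/
def blockClosure {m n q : ℕ} (A : Matrix (Fin m) (Fin n) ℚ) (b : Fin m → ℚ)
    (L : Finset (Fin n)) (π : Fin n → Fin q) (S : Finset (Fin q)) : Set (Fin n → ℚ) :=
  sparseClosure A b L {j | π j ∈ S}

/-- The column block-sparse closure `P^{𝒱,P} = ⋂_{S ∈ 𝒱} P^(S)` for a support list `𝒱`. -/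
def listClosure {m n q : ℕ} (A : Matrix (Fin m) (Fin n) ℚ) (b : Fin m → ℚ)
    (L : Finset (Fin n)) (π : Fin n → Fin q) (𝒱 : Finset (Finset (Fin q))) :
    Set (Fin n → ℚ) :=
  ⋂ S ∈ 𝒱, blockClosure A b L π S

/-- The super sparse closure `P^{S.S.}`: support list of all singletons. -/
def superSparseClosure {m n q : ℕ} (A : Matrix (Fin m) (Fin n) ℚ) (b : Fin m → ℚ)
    (L : Finset (Fin n)) (π : Fin n → Fin q) : Set (Fin n → ℚ) :=
  ⋂ u : Fin q, blockClosure A b L π {u}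

/-- The natural sparse closure `P^{N.S.}`: for each row `i` of `A`, add all cuts supported
on the variables of the blocks touched by row `i`. -/
def naturalSparseClosure {m n q : ℕ} (A : Matrix (Fin m) (Fin n) ℚ) (b : Fin m → ℚ)
    (L : Finset (Fin n)) (π : Fin n → Fin q) : Set (Fin n → ℚ) :=
  ⋂ i : Fin m, sparseClosure A b L {j | ∃ j', π j' = π j ∧ A i j' ≠ 0}

/-- A mixed stable set of `G` subordinate to the collection `𝒱`: a collection `M` of subsets
of vertices, each contained in a member of `𝒱`, pairwise disjoint, with no edge of `G`
between distinct members. -/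
def MixedStableSet {V : Type*} (G : SimpleGraph V) (𝒱 : Set (Finset V))
    (M : Finset (Finset V)) : Prop :=
  (∀ s ∈ M, ∃ t ∈ 𝒱, s ⊆ t) ∧
  (∀ s ∈ M, ∀ t ∈ M, s ≠ t → Disjoint s t) ∧
  (∀ s ∈ M, ∀ t ∈ M, s ≠ t → ∀ u ∈ s, ∀ v ∈ t, ¬ G.Adj u v)

lemma isLinearMap_dotp {n : ℕ} (α : Fin n → ℚ) : IsLinearMap ℚ (dotp α) :=
  ⟨dotProduct_add α, fun a x => dotProduct_smul a α x⟩

lemma dotp_le_of_mem_intHull {m n : ℕ} {A : Matrix (Fin m) (Fin n) ℚ} {b : Fin m → ℚ}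
    {L : Finset (Fin n)} {α : Fin n → ℚ} {β : ℚ} (h : ∀ x ∈ mipSet A b L, dotp α x ≤ β)
    {x : Fin n → ℚ} (hx : x ∈ intHull A b L) : dotp α x ≤ β :=
  convexHull_min h (convex_halfSpace_le (isLinearMap_dotp α) β) hx

/-- Otherwise `αᵀx ≤ αᵀx - ε` would be a valid sparse cut on `N`. -/
lemma exists_mem_mipSet_sub_lt_dotp {m n : ℕ} {A : Matrix (Fin m) (Fin n) ℚ} {b : Fin m → ℚ}
    {L : Finset (Fin n)} {N : Set (Fin n)} {x : Fin n → ℚ} (hx : x ∈ sparseClosure A b L N)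
    {α : Fin n → ℚ} (hα : ∀ j, α j ≠ 0 → j ∈ N) {ε : ℚ} (hε : 0 < ε) :
    ∃ x' ∈ mipSet A b L, dotp α x - ε < dotp α x' := by
  by_contra! h
  have hcut := Set.mem_iInter₂.mp (Set.mem_iInter.mp hx.2 α) (dotp α x - ε)
    ⟨fun _ hx' => dotp_le_of_mem_intHull h hx', hα⟩
  exact (sub_lt_self _ hε).not_ge hcut

section MixedStableSet

variable {V : Type*} {G : SimpleGraph V} {𝒱 : Set (Finset V)} {M : Finset (Finset V)}

lemma MixedStableSet.pairwiseDisjoint (hM : MixedStableSet G 𝒱 M) :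
    (M : Set (Finset V)).PairwiseDisjoint id :=
  fun s hs t ht hst => hM.2.1 s hs t ht hst

lemma MixedStableSet.ite_exists_mem_eq_sum [DecidableEq V] (hM : MixedStableSet G 𝒱 M)
    (v : V) {β : Type*} [AddCommMonoid β] (a : β) :
    (if ∃ s ∈ M, v ∈ s then a else 0) = ∑ s ∈ M, if v ∈ s then a else 0 := by
  split_ifs with hv
  · obtain ⟨s, hs, hvs⟩ := hv
    rw [sum_eq_single_of_mem s hs, if_pos hvs]
    exact fun t ht hts => if_neg fun hvt => hts (hM.pairwiseDisjoint.elim_finset ht hs v hvt hvs)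
  · exact (sum_eq_zero fun s hs => if_neg fun hvs => hv ⟨s, hs, hvs⟩).symm

end MixedStableSet

section Packing

variable {m n q : ℕ} {A : Matrix (Fin m) (Fin n) ℚ} {π : Fin n → Fin q}
  {𝒱 : Set (Finset (Fin q))} {M : Finset (Finset (Fin q))}

/-- The blocks met by a single row of `A` form a clique of the packing graph. -/
lemma MixedStableSet.eq_of_row_ne_zero (hM : MixedStableSet (packGraph A π) 𝒱 M)
    {s t : Finset (Fin q)} (hs : s ∈ M) (ht : t ∈ M) {i : Fin m} {j j' : Fin n}
    (hjs : π j ∈ s) (hj't : π j' ∈ t) (hij : A i j ≠ 0) (hij' : A i j' ≠ 0) : s = t := by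
  by_contra hst
  by_cases hjj' : π j = π j'
  · exact hst (hM.pairwiseDisjoint.elim_finset hs ht _ hjs (hjj' ▸ hj't))
  · exact hM.2.2 s hs t ht hst _ hjs _ hj't ⟨hjj', i, j, j', rfl, rfl, hij, hij'⟩

noncomputable def glueBlocks (M : Finset (Finset (Fin q))) (π : Fin n → Fin q)
    (xs : Finset (Fin q) → Fin n → ℚ) : Fin n → ℚ :=
  ∑ s ∈ M, (π ⁻¹' ↑s).indicator (xs s)

lemma glueBlocks_apply_of_mem (hM : MixedStableSet (packGraph A π) 𝒱 M)
    (xs : Finset (Fin q) → Fin n → ℚ) {s : Finset (Fin q)} (hs : s ∈ M) {j : Fin n}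
    (hj : π j ∈ s) : glueBlocks M π xs j = xs s j := by
  rw [glueBlocks, Finset.sum_apply, sum_eq_single_of_mem s hs,
    Set.indicator_of_mem (s := π ⁻¹' ↑s) hj]
  intro t ht hts
  exact Set.indicator_of_notMem (s := π ⁻¹' ↑t)
    (fun hjt => hts (hM.pairwiseDisjoint.elim_finset ht hs _ hjt hj)) _

lemma glueBlocks_apply_of_forall_notMem (xs : Finset (Fin q) → Fin n → ℚ) {j : Fin n}
    (hj : ∀ s ∈ M, π j ∉ s) : glueBlocks M π xs j = 0 := by
  rw [glueBlocks, Finset.sum_apply]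
  exact sum_eq_zero fun s hs => Set.indicator_of_notMem (s := π ⁻¹' ↑s) (hj s hs) _

lemma dotp_glueBlocks (c : Fin n → ℚ) (xs : Finset (Fin q) → Fin n → ℚ) :
    dotp c (glueBlocks M π xs) = ∑ s ∈ M, dotp ((π ⁻¹' ↑s).indicator c) (xs s) := by
  simp only [dotp, glueBlocks, Finset.sum_apply, mul_sum]
  rw [sum_comm]
  refine sum_congr rfl fun s _ => sum_congr rfl fun j _ => ?_
  rw [← Set.indicator_mul_right, Set.indicator_mul_left]

variable {b : Fin m → ℚ} {L : Finset (Fin n)}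

lemma glueBlocks_row_le (hA : ∀ i j, 0 ≤ A i j) (hb : ∀ i, 0 ≤ b i)
    (hM : MixedStableSet (packGraph A π) 𝒱 M) {xs : Finset (Fin q) → Fin n → ℚ}
    (hxs : ∀ s ∈ M, xs s ∈ mipSet A b L) (i : Fin m) :
    ∑ j, A i j * glueBlocks M π xs j ≤ b i := by
  by_cases hrow : ∃ s ∈ M, ∃ j, π j ∈ s ∧ A i j ≠ 0
  · obtain ⟨s, hs, j₀, hj₀s, hij₀⟩ := hrow
    refine le_trans (sum_le_sum fun j _ => ?_) ((hxs s hs).1 i)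
    rcases eq_or_ne (A i j) 0 with hij | hij
    · simp [hij]
    by_cases hj : ∃ t ∈ M, π j ∈ t
    · obtain ⟨t, ht, hjt⟩ := hj
      obtain rfl := hM.eq_of_row_ne_zero hs ht hj₀s hjt hij₀ hij
      rw [glueBlocks_apply_of_mem hM xs hs hjt]
    · rw [glueBlocks_apply_of_forall_notMem xs fun t ht hjt => hj ⟨t, ht, hjt⟩, mul_zero]
      exact mul_nonneg (hA i j) ((hxs s hs).2.1 j)
  · push Not at hrow
    refine (sum_eq_zero fun j _ => ?_).trans_le (hb i)
    rcases eq_or_ne (A i j) 0 with hij | hij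
    · rw [hij, zero_mul]
    · rw [glueBlocks_apply_of_forall_notMem xs fun t ht hjt => hij (hrow t ht j hjt), mul_zero]

lemma glueBlocks_mem_mipSet (hA : ∀ i j, 0 ≤ A i j) (hb : ∀ i, 0 ≤ b i)
    (hM : MixedStableSet (packGraph A π) 𝒱 M) {xs : Finset (Fin q) → Fin n → ℚ}
    (hxs : ∀ s ∈ M, xs s ∈ mipSet A b L) : glueBlocks M π xs ∈ mipSet A b L := by
  refine ⟨glueBlocks_row_le hA hb hM hxs, fun j => ?_, fun j hj => ?_⟩
  · rw [glueBlocks, Finset.sum_apply]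
    exact sum_nonneg fun s hs => Set.indicator_nonneg (fun j _ => (hxs s hs).2.1 j) j
  · by_cases hcov : ∃ s ∈ M, π j ∈ s
    · obtain ⟨s, hs, hjs⟩ := hcov
      rw [glueBlocks_apply_of_mem hM xs hs hjs]
      exact (hxs s hs).2.2 j hj
    · exact ⟨0, by rw [glueBlocks_apply_of_forall_notMem xs fun s hs hjs => hcov ⟨s, hs, hjs⟩,
        Int.cast_zero]⟩

end Packing

lemma exists_ne_zero_of_one_le_sum_mul_ite {ι : Type*} [Fintype ι] {y : ι → ℚ} {p : ι → Prop}
    [DecidablePred p] (h : 1 ≤ ∑ i, y i * if p i then 1 else 0) : ∃ i, y i ≠ 0 ∧ p i := by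
  by_contra! hy
  have hzero : ∑ i, y i * (if p i then 1 else 0) = 0 := sum_eq_zero fun i _ => by
    by_cases hi : p i
    · rw [if_pos hi, by_contra fun h => hy i h hi, zero_mul]
    · rw [if_neg hi, mul_zero]
  linarith

lemma MixedStableSet.sum_covered_le_of_mem_listClosure {m n q : ℕ}
    {A : Matrix (Fin m) (Fin n) ℚ} {b : Fin m → ℚ} {c : Fin n → ℚ} {L : Finset (Fin n)}
    {π : Fin n → Fin q} {𝒱 M : Finset (Finset (Fin q))} (hA : ∀ i j, 0 ≤ A i j)
    (hb : ∀ i, 0 ≤ b i) (hM : MixedStableSet (packGraph A π) ↑𝒱 M) {z : ℚ}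
    (hz : ∀ x' ∈ mipSet A b L, dotp c x' ≤ z) {x : Fin n → ℚ}
    (hx : x ∈ listClosure A b L π 𝒱) :
    ∑ j, (if ∃ s ∈ M, π j ∈ s then 1 else 0) * (c j * x j) ≤ z := by
  have hdecomp : ∑ j, (if ∃ s ∈ M, π j ∈ s then 1 else 0) * (c j * x j) =
      ∑ s ∈ M, dotp ((π ⁻¹' ↑s).indicator c) x := by
    simp only [hM.ite_exists_mem_eq_sum, sum_mul, dotp]
    rw [sum_comm]
    refine sum_congr rfl fun s _ => sum_congr rfl fun j _ => ?_
    classical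
    rw [← Set.indicator_mul_left, Set.indicator_apply]
    simp only [ite_mul, one_mul, zero_mul, Set.mem_preimage, mem_coe]
  rw [hdecomp]
  refine le_of_forall_pos_lt_add fun ε hε => ?_
  set δ := ε / (#M + 1)
  have hδ : 0 < δ := by positivity
  have hpick : ∀ s ∈ M, ∃ x' ∈ mipSet A b L,
      dotp ((π ⁻¹' ↑s).indicator c) x - δ < dotp ((π ⁻¹' ↑s).indicator c) x' := by
    intro s hs
    obtain ⟨t, ht, hst⟩ := hM.1 s hs
    have hxt : x ∈ blockClosure A b L π t := Set.mem_iInter₂.mp hx t ht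
    exact exists_mem_mipSet_sub_lt_dotp hxt
      (fun j hj => hst (Set.mem_of_indicator_ne_zero (s := π ⁻¹' ↑s) hj)) hδ
  choose! xs hxsP hxs using hpick
  have hεδ : (#M + 1) * δ = ε := by simp only [δ]; field_simp
  calc ∑ s ∈ M, dotp ((π ⁻¹' ↑s).indicator c) x
      ≤ ∑ s ∈ M, (dotp ((π ⁻¹' ↑s).indicator c) (xs s) + δ) :=
        sum_le_sum fun s hs => by linarith [hxs s hs]
    _ = dotp c (glueBlocks M π xs) + #M * δ := by
        rw [sum_add_distrib, dotp_glueBlocks, sum_const, nsmul_eq_mul]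
    _ ≤ z + #M * δ := by grw [hz _ (glueBlocks_mem_mipSet hA hb hM hxsP)]
    _ < z + ε := by linarith

theorem packing_listClosure_le_fracMixedChromatic_mul_zI_general
    {m n q : ℕ}
    (A : Matrix (Fin m) (Fin n) ℚ) (b : Fin m → ℚ) (c : Fin n → ℚ) (L : Finset (Fin n))
    (hA : ∀ i j, 0 ≤ A i j) (hb : ∀ i, 0 ≤ b i) (hc : ∀ j, 0 ≤ c j)
    (π : Fin n → Fin q)
    (𝒱 : Finset (Finset (Fin q)))
    -- `y` is any feasible solution to the LP defining the fractional mixed chromatic number: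
    (y : Finset (Finset (Fin q)) → ℚ)
    (hy0 : ∀ M, 0 ≤ y M)
    (hysupp : ∀ M, y M ≠ 0 → MixedStableSet (packGraph A π) (↑𝒱) M)
    (hycover : ∀ v : Fin q,
      (1 : ℚ) ≤ ∑ M : Finset (Finset (Fin q)), y M * (if ∃ s ∈ M, v ∈ s then 1 else 0))
    -- `xI` attains the integer optimum `z^I`:
    (xI : Fin n → ℚ)
    (hxImax : ∀ x ∈ intHull A b L, dotp c x ≤ dotp c xI) :
    -- `z^{𝒱,P} ≤ (Σ_M y_M) · z^I`:
    ∀ x ∈ listClosure A b L π 𝒱,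
      dotp c x ≤ (∑ M : Finset (Finset (Fin q)), y M) * dotp c xI := by
  intro x hx
  have hx0 : ∀ j, 0 ≤ x j := fun j => by
    obtain ⟨M, hyM, s, hs, -⟩ := exists_ne_zero_of_one_le_sum_mul_ite (hycover (π j))
    obtain ⟨t, ht, -⟩ := (hysupp M hyM).1 s hs
    exact (Set.mem_iInter₂.mp hx t ht).1.2 j
  have hzI : ∀ x' ∈ mipSet A b L, dotp c x' ≤ dotp c xI :=
    fun x' hx' => hxImax x' (subset_convexHull ℚ _ hx')
  calc dotp c x = ∑ j, c j * x j := rfl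
    _ ≤ ∑ j, (∑ M, y M * if ∃ s ∈ M, π j ∈ s then 1 else 0) * (c j * x j) :=
        sum_le_sum fun j _ => le_mul_of_one_le_left (mul_nonneg (hc j) (hx0 j)) (hycover (π j))
    _ = ∑ M, y M * ∑ j, (if ∃ s ∈ M, π j ∈ s then 1 else 0) * (c j * x j) := by
        simp only [sum_mul, mul_sum, mul_assoc]
        exact sum_comm
    _ ≤ ∑ M, y M * dotp c xI := sum_le_sum fun M _ => by
        rcases eq_or_ne (y M) 0 with hyM | hyM
        · simp [hyM]
        · exact mul_le_mul_of_nonneg_left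
            ((hysupp M hyM).sum_covered_le_of_mem_listClosure hA hb hzI hx) (hy0 M)
    _ = (∑ M, y M) * dotp c xI := by rw [sum_mul]

/-- **Theorem (packing).** For a packing integer program with `A, b, c ≥ 0`, a partition of
the columns (given by the surjection `π`) and any support list `𝒱`, the optimum over the
column block-sparse closure is at most `η^𝒱(G) · z^I`, where `η^𝒱(G)` is the fractional
mixed chromatic number of the packing interaction graph w.r.t. `𝒱`.  The fractional mixed
chromatic number is encoded by quantifying over all feasible fractional covers `y` by mixed
stable sets subordinate to `𝒱`; the bound then holds with `Σ_M y_M` in place of `η^𝒱(G)`. -/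
theorem packing_listClosure_le_fracMixedChromatic_mul_zI
    {m n q : ℕ}
    (A : Matrix (Fin m) (Fin n) ℚ) (b : Fin m → ℚ) (c : Fin n → ℚ) (L : Finset (Fin n))
    (hA : ∀ i j, 0 ≤ A i j) (hb : ∀ i, 0 ≤ b i) (hc : ∀ j, 0 ≤ c j)
    (π : Fin n → Fin q) (hπ : Function.Surjective π)
    (𝒱 : Finset (Finset (Fin q)))
    -- `y` is any feasible solution to the LP defining the fractional mixed chromatic number:
    (y : Finset (Finset (Fin q)) → ℚ)
    (hy0 : ∀ M, 0 ≤ y M)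
    (hysupp : ∀ M, y M ≠ 0 → MixedStableSet (packGraph A π) (↑𝒱) M)
    (hycover : ∀ v : Fin q,
      (1 : ℚ) ≤ ∑ M : Finset (Finset (Fin q)), y M * (if ∃ s ∈ M, v ∈ s then 1 else 0))
    -- `xI` attains the integer optimum `z^I`:
    (xI : Fin n → ℚ) (hxI : xI ∈ intHull A b L)
    (hxImax : ∀ x ∈ intHull A b L, dotp c x ≤ dotp c xI) :
    -- `z^{𝒱,P} ≤ (Σ_M y_M) · z^I`:
    ∀ x ∈ listClosure A b L π 𝒱,
      dotp c x ≤ (∑ M : Finset (Finset (Fin q)), y M) * dotp c xI :=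
  packing_listClosure_le_fracMixedChromatic_mul_zI_general A b c L hA hb hc π 𝒱 y hy0 hysupp hycover
    xI hxImax
end

section
/- Let the optimization problem be max c^T x subject to Ax ≤ b, x_j ∈ ℤ_+ for j ∈ L, x_j ∈ ℝ_+ for j ∈ [n]∖L, with arbitrary A ∈ ℚ^{m×n}, b ∈ ℚ^m, and c ∈ ℚ_+^n. Let J be a partition of the column index set [n], let G^{pack}_{A,J} = (V,E) be the packing interaction graph, and let 𝒱 be a support list. If the instance is feasible, then z^{𝒱,P} ≤ (|V| + 1 − D_𝒱) · z^I, where D_𝒱 is the corrected average density of 𝒱. -/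
/-!
Since `c ≥ 0` and `P^I ⊆ ℚⁿ₊`, the objective restricted to the columns of any set of blocks is
bounded by `z^I` on `P^I`; if those blocks lie in some `S ∈ 𝒱`, this is a sparse cut on `S`.
So at a point of `P^{𝒱,P}` the blocks of `S` together contribute at most `z^I`, and each of the
`|V| - |S|` remaining blocks (covered by some member of `𝒱`) at most `z^I` as well. Taking for
`S` a member of `T` of at least average size `D(T)` gives the bound.
-/

open Finset

section Cuts

variable {m n : ℕ} {A : Matrix (Fin m) (Fin n) ℚ} {b : Fin m → ℚ} {L : Finset (Fin n)}

lemma intHull_subset_Ici_zero : intHull A b L ⊆ Set.Ici 0 :=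
  convexHull_min (fun _ hy => hy.2.1) (convex_Ici 0)

lemma dotp_nonneg {c y : Fin n → ℚ} (hc : 0 ≤ c) (hy : 0 ≤ y) : 0 ≤ dotp c y :=
  sum_nonneg fun j _ => mul_nonneg (hc j) (hy j)

lemma dotp_indicator_le {c y : Fin n → ℚ} (hc : 0 ≤ c) (hy : 0 ≤ y) (N : Set (Fin n)) :
    dotp (N.indicator c) y ≤ dotp c y :=
  sum_le_sum fun j _ => by
    by_cases hj : j ∈ N
    · simp [hj]
    · simpa [hj] using mul_nonneg (hc j) (hy j)

lemma dotp_le_of_mem_sparseClosure {N : Set (Fin n)} {x α : Fin n → ℚ} {β : ℚ}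
    (hx : x ∈ sparseClosure A b L N) (hvalid : ∀ y ∈ intHull A b L, dotp α y ≤ β)
    (hsupp : ∀ j, α j ≠ 0 → j ∈ N) : dotp α x ≤ β := by
  simp only [sparseClosure, Set.mem_inter_iff, Set.mem_iInter] at hx
  exact hx.2 α β ⟨hvalid, hsupp⟩

lemma dotp_indicator_le_of_mem_sparseClosure {c x : Fin n → ℚ} {z : ℚ} (hc : 0 ≤ c)
    (hz : ∀ y ∈ intHull A b L, dotp c y ≤ z) {N N' : Set (Fin n)} (hN' : N' ⊆ N)
    (hx : x ∈ sparseClosure A b L N) : dotp (N'.indicator c) x ≤ z :=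
  dotp_le_of_mem_sparseClosure hx
    (fun y hy => (dotp_indicator_le hc (intHull_subset_Ici_zero hy) N').trans (hz y hy))
    (fun _ hj => hN' (Set.mem_of_indicator_ne_zero hj))

end Cuts

section Blocks

variable {n q : ℕ} (π : Fin n → Fin q) (c x : Fin n → ℚ)

lemma dotp_indicator_preimage (S : Finset (Fin q)) :
    dotp ((π ⁻¹' S).indicator c) x = ∑ v ∈ S, dotp ((π ⁻¹' {v}).indicator c) x := by
  unfold dotp
  rw [sum_comm]
  refine sum_congr rfl fun j _ => ?_
  classical
  simp only [Set.indicator_apply, Set.mem_preimage, Set.mem_singleton_iff, mem_coe, ite_mul,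
    zero_mul, sum_ite_eq]

lemma dotp_eq_sum_blocks : dotp c x = ∑ v, dotp ((π ⁻¹' {v}).indicator c) x := by
  simpa using dotp_indicator_preimage π c x univ

end Blocks

section ListClosure

variable {m n q : ℕ} {A : Matrix (Fin m) (Fin n) ℚ} {b : Fin m → ℚ} {L : Finset (Fin n)}
  {π : Fin n → Fin q} {𝒱 : Finset (Finset (Fin q))} {c x : Fin n → ℚ} {z : ℚ}

lemma dotp_indicator_preimage_le_of_mem_listClosure (hc : 0 ≤ c)
    (hz : ∀ y ∈ intHull A b L, dotp c y ≤ z) (hx : x ∈ listClosure A b L π 𝒱)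
    {S : Finset (Fin q)} {U : Set (Fin q)} (hS : S ∈ 𝒱) (hUS : U ⊆ S) :
    dotp ((π ⁻¹' U).indicator c) x ≤ z :=
  dotp_indicator_le_of_mem_sparseClosure (N := {j | π j ∈ S}) hc hz (fun _ hj => hUS hj)
    (Set.mem_iInter₂.1 hx S hS)

lemma sum_blocks_le_card_mul_of_mem_listClosure (hc : 0 ≤ c)
    (hz : ∀ y ∈ intHull A b L, dotp c y ≤ z) (hx : x ∈ listClosure A b L π 𝒱)
    (hcover : ∀ v, ∃ S ∈ 𝒱, v ∈ S) (s : Finset (Fin q)) :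
    ∑ v ∈ s, dotp ((π ⁻¹' {v}).indicator c) x ≤ s.card * z := by
  rw [← nsmul_eq_mul]
  refine sum_le_card_nsmul _ _ _ fun v _ => ?_
  obtain ⟨S, hS, hv⟩ := hcover v
  exact dotp_indicator_preimage_le_of_mem_listClosure hc hz hx hS (by simpa using hv)

lemma dotp_le_card_mul_of_mem_listClosure (hc : 0 ≤ c) (hz : ∀ y ∈ intHull A b L, dotp c y ≤ z)
    (hx : x ∈ listClosure A b L π 𝒱) (hcover : ∀ v, ∃ S ∈ 𝒱, v ∈ S) :
    dotp c x ≤ q * z := by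
  simpa [← dotp_eq_sum_blocks] using
    sum_blocks_le_card_mul_of_mem_listClosure hc hz hx hcover univ

lemma dotp_le_of_mem_listClosure (hc : 0 ≤ c) (hz : ∀ y ∈ intHull A b L, dotp c y ≤ z)
    (hx : x ∈ listClosure A b L π 𝒱) (hcover : ∀ v, ∃ S ∈ 𝒱, v ∈ S)
    {S : Finset (Fin q)} (hS : S ∈ 𝒱) :
    dotp c x ≤ (q + 1 - S.card) * z := by
  have hcompl : ((Sᶜ).card : ℚ) = q - S.card := by
    rw [card_compl, Nat.cast_sub (card_le_univ S), Fintype.card_fin]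
  calc dotp c x
      = dotp ((π ⁻¹' S).indicator c) x + ∑ v ∈ Sᶜ, dotp ((π ⁻¹' {v}).indicator c) x := by
        rw [dotp_eq_sum_blocks π, ← sum_add_sum_compl S, dotp_indicator_preimage]
    _ ≤ z + (Sᶜ).card * z := add_le_add
        (dotp_indicator_preimage_le_of_mem_listClosure hc hz hx hS subset_rfl)
        (sum_blocks_le_card_mul_of_mem_listClosure hc hz hx hcover Sᶜ)
    _ = (q + 1 - S.card) * z := by rw [hcompl]; ring

end ListClosure

theorem arbitrary_packing_listClosure_density_bound_general
    {m n q : ℕ}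
    (A : Matrix (Fin m) (Fin n) ℚ) (b : Fin m → ℚ) (c : Fin n → ℚ) (L : Finset (Fin n))
    (hc : ∀ j, 0 ≤ c j)
    (π : Fin n → Fin q)
    (𝒱 : Finset (Finset (Fin q)))
    (T : Finset (Finset (Fin q))) (hT𝒱 : T ⊆ 𝒱)
    (hTcover : ∀ v : Fin q, ∃ S ∈ T, v ∈ S)
    (xI : Fin n → ℚ) (hxI : xI ∈ intHull A b L)
    (hxImax : ∀ x ∈ intHull A b L, dotp c x ≤ dotp c xI) :
    ∀ x ∈ listClosure A b L π 𝒱,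
      dotp c x ≤
        ((q : ℚ) + 1 - (∑ S ∈ T, (S.card : ℚ)) / (T.card : ℚ)) * dotp c xI := by
  intro x hx
  have hz : 0 ≤ dotp c xI := dotp_nonneg hc (intHull_subset_Ici_zero hxI)
  have hcover (v : Fin q) : ∃ S ∈ 𝒱, v ∈ S :=
    (hTcover v).imp fun _ hS => ⟨hT𝒱 hS.1, hS.2⟩
  rcases T.eq_empty_or_nonempty with rfl | hT
  · have hle := dotp_le_card_mul_of_mem_listClosure hc hxImax hx hcover
    simp only [sum_empty, card_empty, Nat.cast_zero, div_zero, sub_zero]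
    linarith
  obtain ⟨S, hST, hD⟩ :=
    exists_le_of_le_expect hT (expect_eq_sum_div_card T fun S => (S.card : ℚ)).ge
  calc dotp c x ≤ (q + 1 - S.card) * dotp c xI :=
        dotp_le_of_mem_listClosure hc hxImax hx hcover (hT𝒱 hST)
    _ ≤ _ := by gcongr

/-- **Theorem (packing-type problems with arbitrary `A`).** Let the problem be
`max cᵀx, Ax ≤ b, x ≥ 0` (integrality on `L`) with arbitrary `A, b` and `c ≥ 0`.  If the
instance is feasible, then `z^{𝒱,P} ≤ (|V| + 1 - D_𝒱) · z^I`, where `D_𝒱` is the corrected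
average density of the support list `𝒱`.  The corrected average density is encoded by a
subcollection `T ⊆ 𝒱` that covers all vertices and maximizes the average cardinality
`D(T) = (Σ_{S ∈ T} |S|)/|T|` among all covering subcollections, so `D_𝒱 = D(T)`. -/
theorem arbitrary_packing_listClosure_density_bound
    {m n q : ℕ}
    (A : Matrix (Fin m) (Fin n) ℚ) (b : Fin m → ℚ) (c : Fin n → ℚ) (L : Finset (Fin n))
    (hc : ∀ j, 0 ≤ c j)
    (π : Fin n → Fin q) (hπ : Function.Surjective π)
    (hfeas : (mipSet A b L).Nonempty)
    (𝒱 : Finset (Finset (Fin q)))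
    (T : Finset (Finset (Fin q))) (hT𝒱 : T ⊆ 𝒱)
    (hTcover : ∀ v : Fin q, ∃ S ∈ T, v ∈ S)
    (hTmax : ∀ W ⊆ 𝒱, (∀ v : Fin q, ∃ S ∈ W, v ∈ S) →
      (∑ S ∈ W, (S.card : ℚ)) / (W.card : ℚ) ≤ (∑ S ∈ T, (S.card : ℚ)) / (T.card : ℚ))
    (xI : Fin n → ℚ) (hxI : xI ∈ intHull A b L)
    (hxImax : ∀ x ∈ intHull A b L, dotp c x ≤ dotp c xI) :
    ∀ x ∈ listClosure A b L π 𝒱,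
      dotp c x ≤
        ((q : ℚ) + 1 - (∑ S ∈ T, (S.card : ℚ)) / (T.card : ℚ)) * dotp c xI :=
  arbitrary_packing_listClosure_density_bound_general A b c L hc π 𝒱 T hT𝒱 hTcover xI hxI hxImax
end

section
/- Let T = (V,E) be a tree with at least one edge and maximum degree Δ. Then there exist 2Δ − 1 sets of edges E_1,…,E_{2Δ−1} of T and 2Δ − 1 sets of nodes V_1,…,V_{2Δ−1} of T such that: (1) for each i ∈ [2Δ−1], the collection E_i ∪ V_i (viewing each edge as a 2-element set of vertices and each node as a singleton) is a mixed stable set for T subordinate to the collection of edges E; and (2) each node of T belongs to the sets of exactly Δ of the collections E_1 ∪ V_1, …, E_{2Δ−1} ∪ V_{2Δ−1}. -/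
open Finset

/-!
Give every vertex `v` a set `S v` of `Δ` labels out of `2Δ - 1` such that adjacent vertices share
at most one label and no vertex shares a label with two of its neighbours. The vertices carrying
label `i` then induce a graph whose components are single vertices and single edges; these
components form the `i`-th mixed stable set, and each vertex lies in exactly the `Δ` of them
indexed by its labels.

Such a labelling of a forest is built by attaching one leaf `l` at a time to a vertex `p`: since
`p` has at most `Δ - 1` other neighbours, each sharing at most one label with it, some label `a`
of `p` is shared with none of them, and `l` receives `a` together with the `Δ - 1` labels that
`p` lacks.
-/

namespace SimpleGraph

variable {V ι : Type*} {G : SimpleGraph V}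

theorem IsAcyclic.exists_neighborSet_eq_singleton [Finite V] (hG : G.IsAcyclic) {a b : V}
    (hab : G.Adj a b) : ∃ l p, G.neighborSet l = {p} := by
  have : Nonempty V := ⟨a⟩
  obtain ⟨u, v, p, hp, hmax⟩ := Walk.exists_isPath_forall_isPath_length_le_length G
  have hnil : ¬p.Nil := fun h => by
    simpa [Walk.length_eq_zero_iff.2 h] using hmax a b _ (Path.singleton hab).2
  refine ⟨u, p.snd, Set.eq_singleton_iff_unique_mem.2 ⟨p.adj_snd hnil, fun w hw => ?_⟩⟩
  refine hG.eq_snd_of_adj_start hp hw (by_contra fun hw' => ?_)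
  simpa using hmax w v _ (hp.cons hw' (h := hw.symm))

def IsMatchingLabelling (G : SimpleGraph V) (S : V → Finset ι) : Prop :=
  ∀ v i, i ∈ S v → {u | G.Adj v u ∧ i ∈ S u}.Subsingleton

structure IsSparseLabelling [DecidableEq ι] (G : SimpleGraph V) (Δ : ℕ) (S : V → Finset ι) :
    Prop where
  card_eq : ∀ v, #(S v) = Δ
  card_inter_le_one : ∀ ⦃u v⦄, G.Adj u v → #(S u ∩ S v) ≤ 1
  isMatchingLabelling : G.IsMatchingLabelling S

theorem IsSparseLabelling.exists_mem_forall_adj_notMem [Finite V] [DecidableEq ι] {Δ : ℕ}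
    {S : V → Finset ι} (hS : G.IsSparseLabelling Δ S) {p : V} (hp : (G.neighborSet p).ncard < Δ) :
    ∃ a ∈ S p, ∀ u, G.Adj p u → a ∉ S u := by
  classical
  have := Fintype.ofFinite V
  set N := (G.neighborSet p).toFinset
  obtain ⟨a, haS, haN⟩ : ∃ a ∈ S p, a ∉ N.biUnion (fun u => S p ∩ S u) := by
    refine exists_mem_notMem_of_card_lt_card ?_
    calc #(N.biUnion (fun u => S p ∩ S u))
        ≤ #N * 1 := card_biUnion_le_card_mul _ _ _ fun u hu =>
          hS.card_inter_le_one (by simpa [N] using hu)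
      _ < #(S p) := by rwa [hS.card_eq, mul_one, ← Set.ncard_eq_toFinset_card']
  refine ⟨a, haS, fun u hpu hau => haN (mem_biUnion.2 ⟨u, ?_, by simp [haS, hau]⟩)⟩
  simpa [N] using hpu

theorem deleteEdges_adj_of_ne {l p u v : V} (huv : G.Adj u v) (hu : u ≠ l) (hv : v ≠ l) :
    (G.deleteEdges {s(l, p)}).Adj u v :=
  deleteEdges_adj.2 ⟨huv, by simp [hu, hv]⟩

theorem ncard_neighborSet_deleteEdges_lt [Finite V] {l p : V} (hlp : G.Adj l p) :
    ((G.deleteEdges {s(l, p)}).neighborSet p).ncard < (G.neighborSet p).ncard :=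
  calc ((G.deleteEdges {s(l, p)}).neighborSet p).ncard
      ≤ (G.neighborSet p \ {l}).ncard := Set.ncard_le_ncard fun u hu =>
        ⟨(deleteEdges_adj.1 hu).1, by rintro rfl; simp at hu⟩
    _ < (G.neighborSet p).ncard := Set.ncard_sdiff_singleton_lt_of_mem hlp.symm

section Leaf

variable [DecidableEq V] {l p : V}

theorem IsMatchingLabelling.update_leaf [Fintype ι] [DecidableEq ι] {S : V → Finset ι}
    (hl : G.neighborSet l = {p}) (hS : (G.deleteEdges {s(l, p)}).IsMatchingLabelling S) {a : ι}
    (haN : ∀ u, (G.deleteEdges {s(l, p)}).Adj p u → a ∉ S u) :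
    G.IsMatchingLabelling (Function.update S l ((S p)ᶜ ∪ {a})) := by
  have hadj : ∀ {w}, G.Adj l w ↔ w = p := fun {w} => Set.ext_iff.1 hl w
  set S' := Function.update S l ((S p)ᶜ ∪ {a})
  have hS' : ∀ {v}, v ≠ l → S' v = S v := fun hv => Function.update_of_ne hv ..
  -- The only label `l` shares with `p` is `a`, which no other neighbour of `p` carries.
  have hshared : ∀ {v y i}, v ≠ l → G.Adj v l → G.Adj v y → i ∈ S' l → i ∈ S' v → i ∈ S' y →
      y = l := by
    intro v y i hv hvl hvy hil hiv hiy
    obtain rfl : v = p := hadj.1 hvl.symm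
    obtain rfl : i = a := by simp_all [S']
    by_contra hy
    exact haN y (deleteEdges_adj_of_ne hvy hv hy) (hS' hy ▸ hiy)
  intro v i hiv x ⟨hvx, hix⟩ y ⟨hvy, hiy⟩
  by_cases hv : v = l
  · exact (hadj.1 (hv ▸ hvx)).trans (hadj.1 (hv ▸ hvy)).symm
  by_cases hx : x = l
  · exact hx.trans (hshared hv (hx ▸ hvx) hvy (hx ▸ hix) hiv hiy).symm
  by_cases hy : y = l
  · exact hshared hv (hy ▸ hvy) hvx (hy ▸ hiy) hiv hix |>.trans hy.symm
  rw [hS' hv] at hiv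
  rw [hS' hx] at hix
  rw [hS' hy] at hiy
  exact hS v i hiv ⟨deleteEdges_adj_of_ne hvx hv hx, hix⟩ ⟨deleteEdges_adj_of_ne hvy hv hy, hiy⟩

theorem IsSparseLabelling.update_leaf {Δ : ℕ} {S : V → Finset (Fin (2 * Δ - 1))}
    (hl : G.neighborSet l = {p}) (hS : (G.deleteEdges {s(l, p)}).IsSparseLabelling Δ S)
    {a : Fin (2 * Δ - 1)} (haS : a ∈ S p)
    (haN : ∀ u, (G.deleteEdges {s(l, p)}).Adj p u → a ∉ S u) :
    G.IsSparseLabelling Δ (Function.update S l ((S p)ᶜ ∪ {a})) := by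
  have hadj : ∀ {w}, G.Adj l w ↔ w = p := fun {w} => Set.ext_iff.1 hl w
  set S' := Function.update S l ((S p)ᶜ ∪ {a})
  have hS'l : S' l = (S p)ᶜ ∪ {a} := Function.update_self ..
  have hS' : ∀ {v}, v ≠ l → S' v = S v := fun hv => Function.update_of_ne hv ..
  have hS'lp : S' l ∩ S' p = {a} := by
    rw [hS'l, hS' (hadj.2 rfl).ne']
    grind [mem_compl]
  refine ⟨fun v => ?_, fun u v huv => ?_, hS.isMatchingLabelling.update_leaf hl haN⟩
  · by_cases hv : v = l
    · have hΔ : 1 ≤ Δ := hS.card_eq p ▸ card_pos.2 ⟨a, haS⟩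
      have : Disjoint (S p)ᶜ {a} := disjoint_singleton_right.2 (by simpa using haS)
      rw [hv, hS'l, card_union_of_disjoint this, card_compl, hS.card_eq, card_singleton,
        Fintype.card_fin]
      omega
    · rw [hS' hv, hS.card_eq]
  · by_cases hu : u = l
    · obtain rfl := hu
      rw [hadj.1 huv, hS'lp, card_singleton]
    by_cases hv : v = l
    · obtain rfl := hv
      rw [hadj.1 huv.symm, inter_comm, hS'lp, card_singleton]
    rw [hS' hu, hS' hv]
    exact hS.card_inter_le_one (deleteEdges_adj_of_ne huv hu hv)

end Leaf

theorem IsAcyclic.exists_isSparseLabelling [Finite V] (hG : G.IsAcyclic) {Δ : ℕ}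
    (hdeg : ∀ v, (G.neighborSet v).ncard ≤ Δ) :
    ∃ S : V → Finset (Fin (2 * Δ - 1)), G.IsSparseLabelling Δ S := by
  classical
  induction G using WellFoundedLT.induction with
  | _ G ih =>
    by_cases hedge : ∃ a b, G.Adj a b
    · obtain ⟨a, b, hab⟩ := hedge
      obtain ⟨l, p, hl⟩ := hG.exists_neighborSet_eq_singleton hab
      have hlp : G.Adj l p := (Set.eq_singleton_iff_unique_mem.1 hl).1
      have hlt : G.deleteEdges {s(l, p)} < G :=
        lt_of_le_of_ne (deleteEdges_le _) fun h => by simpa [hlp] using congrArg (·.Adj l p) h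
      obtain ⟨S, hS⟩ := ih _ hlt (hG.anti (deleteEdges_le _)) fun v =>
        (Set.ncard_le_ncard fun w hw => (deleteEdges_adj.1 hw).1).trans (hdeg v)
      obtain ⟨a, haS, haN⟩ := hS.exists_mem_forall_adj_notMem <|
        (ncard_neighborSet_deleteEdges_lt hlp).trans_le (hdeg p)
      exact ⟨_, hS.update_leaf hl haS haN⟩
    · push Not at hedge
      obtain ⟨s, -, hs⟩ := exists_subset_card_eq (s := (univ : Finset (Fin (2 * Δ - 1))))
        (n := Δ) (by rw [card_univ, Fintype.card_fin]; omega)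
      exact ⟨fun _ => s, fun _ => hs, fun u v huv => (hedge u v huv).elim,
        fun v _ _ x hx => (hedge v x hx.1).elim⟩

section LabelClass

variable [Fintype V] [DecidableEq V] (G) (S : V → Finset ι) (i : ι)

open Classical in
noncomputable def labelEdges : Finset (Finset V) :=
  {s | ∃ u v, G.Adj u v ∧ i ∈ S u ∧ i ∈ S v ∧ s = {u, v}}

open Classical in
noncomputable def labelIsolated : Finset V :=
  {v | i ∈ S v ∧ ∀ u, G.Adj v u → i ∉ S u}

noncomputable def labelClass : Finset (Finset V) :=
  labelEdges G S i ∪ (labelIsolated G S i).image (fun a => ({a} : Finset V))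

variable {G S i}

theorem mem_labelEdges {s : Finset V} :
    s ∈ labelEdges G S i ↔ ∃ u v, G.Adj u v ∧ i ∈ S u ∧ i ∈ S v ∧ s = {u, v} := by
  simp [labelEdges]

theorem mem_labelClass {s : Finset V} :
    s ∈ labelClass G S i ↔ (∃ u v, G.Adj u v ∧ i ∈ S u ∧ i ∈ S v ∧ s = {u, v}) ∨
      ∃ v, i ∈ S v ∧ (∀ u, G.Adj v u → i ∉ S u) ∧ s = {v} := by
  simp [labelClass, mem_labelEdges, labelIsolated, eq_comm, and_assoc]

theorem IsMatchingLabelling.mem_iff_of_mem_labelClass (hS : G.IsMatchingLabelling S)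
    {s : Finset V} (hs : s ∈ labelClass G S i) {x : V} (hx : x ∈ s) :
    i ∈ S x ∧ ∀ y, y ∈ s ↔ y = x ∨ G.Adj x y ∧ i ∈ S y := by
  have edge : ∀ {u v}, G.Adj u v → i ∈ S u → i ∈ S v →
      i ∈ S u ∧ ∀ y, y ∈ ({u, v} : Finset V) ↔ y = u ∨ G.Adj u y ∧ i ∈ S y :=
    fun {u v} huv hu hv => ⟨hu, fun y => by
      rw [mem_insert, mem_singleton]
      refine or_congr_right ⟨by rintro rfl; exact ⟨huv, hv⟩, fun hy => ?_⟩
      exact (hS u i hu ⟨huv, hv⟩ hy).symm⟩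
  obtain ⟨u, v, huv, hu, hv, rfl⟩ | ⟨v, hv, hiso, rfl⟩ := mem_labelClass.1 hs
  · rcases mem_insert.1 hx with rfl | hx
    · exact edge huv hu hv
    · rw [mem_singleton.1 hx, pair_comm]
      exact edge huv.symm hv hu
  · obtain rfl := mem_singleton.1 hx
    exact ⟨hv, fun y => by simpa using fun hxy hy => (hiso y hxy hy).elim⟩

theorem IsMatchingLabelling.eq_of_mem_labelClass (hS : G.IsMatchingLabelling S)
    {s t : Finset V} (hs : s ∈ labelClass G S i) (ht : t ∈ labelClass G S i) {x : V}
    (hxs : x ∈ s) (hxt : x ∈ t) : s = t :=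
  ext fun y => ((hS.mem_iff_of_mem_labelClass hs hxs).2 y).trans
    ((hS.mem_iff_of_mem_labelClass ht hxt).2 y).symm

theorem IsMatchingLabelling.mixedStableSet_labelClass (hG : ∀ v, ∃ u, G.Adj v u)
    (hS : G.IsMatchingLabelling S) :
    MixedStableSet G {s | ∃ u v, G.Adj u v ∧ s = {u, v}} (labelClass G S i) := by
  refine ⟨fun s hs => ?_, fun s hs t ht hst => ?_, fun s hs t ht hst u hu v hv huv => ?_⟩
  · obtain ⟨u, v, huv, -, -, rfl⟩ | ⟨v, -, -, rfl⟩ := mem_labelClass.1 hs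
    · exact ⟨_, ⟨u, v, huv, rfl⟩, subset_rfl⟩
    · obtain ⟨u, hvu⟩ := hG v
      exact ⟨_, ⟨v, u, hvu, rfl⟩, by simp⟩
  · exact Finset.disjoint_left.2 fun x hxs hxt => hst (hS.eq_of_mem_labelClass hs ht hxs hxt)
  · have hvs : v ∈ s := ((hS.mem_iff_of_mem_labelClass hs hu).2 v).2
      (Or.inr ⟨huv, (hS.mem_iff_of_mem_labelClass ht hv).1⟩)
    exact hst (hS.eq_of_mem_labelClass hs ht hvs hv)

theorem IsMatchingLabelling.filter_mem_labelClass [Fintype ι] (hS : G.IsMatchingLabelling S)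
    (v : V) : ({i | ∃ s ∈ labelClass G S i, v ∈ s} : Finset ι) = S v := by
  ext i
  simp only [mem_filter, mem_univ, true_and]
  refine ⟨fun ⟨s, hs, hv⟩ => (hS.mem_iff_of_mem_labelClass hs hv).1, fun hi => ?_⟩
  by_cases hnbr : ∃ u, G.Adj v u ∧ i ∈ S u
  · obtain ⟨u, hvu, hu⟩ := hnbr
    exact ⟨{v, u}, mem_labelClass.2 (Or.inl ⟨v, u, hvu, hi, hu, rfl⟩), mem_insert_self _ _⟩
  · push Not at hnbr
    exact ⟨{v}, mem_labelClass.2 (Or.inr ⟨v, hi, hnbr, rfl⟩), mem_singleton_self _⟩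

end LabelClass

end SimpleGraph

theorem tree_mixedStableSet_cover_general {V : Type*} [Fintype V] [DecidableEq V]
    (T : SimpleGraph V) (htree : T.IsTree) (hedge : ∃ u v, T.Adj u v)
    (Δ : ℕ)
    (hdegle : ∀ v, (T.neighborSet v).ncard ≤ Δ) :
    ∃ (Es : Fin (2 * Δ - 1) → Finset (Finset V)) (Vs : Fin (2 * Δ - 1) → Finset V),
      (∀ i, ∀ s ∈ Es i, ∃ u v, T.Adj u v ∧ s = {u, v}) ∧
      (∀ i, MixedStableSet T {s : Finset V | ∃ u v, T.Adj u v ∧ s = {u, v}}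
        (Es i ∪ (Vs i).image (fun a => ({a} : Finset V)))) ∧
      (∀ v : V,
        (Finset.univ.filter
          (fun i : Fin (2 * Δ - 1) =>
            ∃ s ∈ Es i ∪ (Vs i).image (fun a => ({a} : Finset V)), v ∈ s)).card = Δ) := by
  obtain ⟨S, hS⟩ := htree.isAcyclic.exists_isSparseLabelling hdegle
  obtain ⟨a, b, hab⟩ := hedge
  have : Nontrivial V := ⟨a, b, hab.ne⟩
  have hT (v : V) : ∃ u, T.Adj v u := by
    simpa [SimpleGraph.IsIsolated] using htree.connected.preconnected.not_isIsolated v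
  refine ⟨T.labelEdges S, T.labelIsolated S, fun i s hs => ?_,
    fun i => hS.isMatchingLabelling.mixedStableSet_labelClass hT, fun v => ?_⟩
  · obtain ⟨u, v, huv, -, -, rfl⟩ := SimpleGraph.mem_labelEdges.1 hs
    exact ⟨u, v, huv, rfl⟩
  · exact (congrArg card (hS.isMatchingLabelling.filter_mem_labelClass v)).trans (hS.card_eq v)

/-- **Lemma (mixed stable set decomposition of trees).** Let `T` be a tree with at least one
edge and maximum degree `Δ`.  Then there are `2Δ - 1` sets of edges `E_1, …, E_{2Δ-1}`
(each edge viewed as a 2-element vertex set) and `2Δ - 1` sets of nodes `V_1, …, V_{2Δ-1}`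
such that each `E_i ∪ V_i` (nodes viewed as singletons) is a mixed stable set for `T`
subordinate to the edge set of `T`, and each node of `T` is covered by exactly `Δ` of the
collections `E_i ∪ V_i`. -/
theorem tree_mixedStableSet_cover {V : Type*} [Fintype V] [DecidableEq V]
    (T : SimpleGraph V) (htree : T.IsTree) (hedge : ∃ u v, T.Adj u v)
    (Δ : ℕ)
    (hdegle : ∀ v, (T.neighborSet v).ncard ≤ Δ)
    (hdegeq : ∃ v, (T.neighborSet v).ncard = Δ) :
    ∃ (Es : Fin (2 * Δ - 1) → Finset (Finset V)) (Vs : Fin (2 * Δ - 1) → Finset V),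
      (∀ i, ∀ s ∈ Es i, ∃ u v, T.Adj u v ∧ s = {u, v}) ∧
      (∀ i, MixedStableSet T {s : Finset V | ∃ u v, T.Adj u v ∧ s = {u, v}}
        (Es i ∪ (Vs i).image (fun a => ({a} : Finset V)))) ∧
      (∀ v : V,
        (Finset.univ.filter
          (fun i : Fin (2 * Δ - 1) =>
            ∃ s ∈ Es i ∪ (Vs i).image (fun a => ({a} : Finset V)), v ∈ s)).card = Δ) :=
  tree_mixedStableSet_cover_general T htree hedge Δ hdegle
end

section
/- Let H = (V,E) be a tree with at least one edge and maximum degree Δ. Then the fractional mixed chromatic number of H with respect to its edge set satisfies η^E(H) ≤ (2Δ − 1)/Δ. -/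
/-!
Root the tree at a vertex `r` and give every vertex `Δ` of the colours `0, …, 2Δ - 2`: the root
gets `0, …, Δ - 1`, and a vertex `v` with parent `p` gets the `Δ - 1` colours missing at `p` plus
one colour of `p` that `p` does not share with its own parent, distinct children of `p` receiving
distinct such colours (there are enough, as `p` has at most `Δ - 1` children, or `Δ` if `p = r`).
Then every vertex shares each of its colours with at most one neighbour, so the vertices carrying a
colour `c` split into single vertices and edges with no edge between two of the parts: a mixed
stable set subordinate to `E`. Giving each of these `2Δ - 1` sets weight `1/Δ` covers every vertex
exactly once.
-/

open Finset

namespace Finset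

theorem sum_card_fiber_div_mul {ι κ : Type*} [Fintype κ] [DecidableEq κ] (s : Finset ι)
    (g : ι → κ) (b : ℚ) (f : κ → ℚ) :
    ∑ j, (#{i ∈ s | g i = j} : ℚ) / b * f j = (∑ i ∈ s, f (g i)) / b := by
  rw [← sum_fiberwise' s g, sum_div]
  refine sum_congr rfl fun j _ => ?_
  rw [sum_const, nsmul_eq_mul]
  ring

variable {α β : Type*} [Inhabited β] {s : Finset α} {t : Finset β}

open Classical in
noncomputable def injInto (s : Finset α) (t : Finset β) (x : α) : β :=
  if h : #s ≤ #t ∧ x ∈ s then t.equivFin.symm (Fin.castLE h.1 (s.equivFin ⟨x, h.2⟩)) else default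

theorem injInto_mem (hst : #s ≤ #t) {x : α} (hx : x ∈ s) : s.injInto t x ∈ t := by
  rw [injInto, dif_pos ⟨hst, hx⟩]
  exact Subtype.prop _

theorem injOn_injInto (hst : #s ≤ #t) : Set.InjOn (s.injInto t) s := by
  intro x hx y hy hxy
  rw [injInto, injInto, dif_pos ⟨hst, hx⟩, dif_pos ⟨hst, hy⟩] at hxy
  simpa using hxy

end Finset

namespace SimpleGraph

section MixedCover

variable {V κ : Type*}

def ColorClassesMaxDegreeLeOne (G : SimpleGraph V) (col : V → Finset κ) : Prop :=
  ∀ ⦃c v u₁ u₂⦄, c ∈ col v → G.Adj v u₁ → G.Adj v u₂ → c ∈ col u₁ → c ∈ col u₂ → u₁ = u₂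

variable [Fintype V] [DecidableEq V]

def IsFractionalMixedCover (G : SimpleGraph V) (𝒱 : Set (Finset V))
    (y : Finset (Finset V) → ℚ) : Prop :=
  (∀ M, 0 ≤ y M) ∧ (∀ M, y M ≠ 0 → MixedStableSet G 𝒱 M) ∧
    ∀ v : V, (1 : ℚ) ≤ ∑ M : Finset (Finset V), y M * (if ∃ s ∈ M, v ∈ s then 1 else 0)

variable {G : SimpleGraph V} {col : V → Finset κ} {c : κ} {v x : V}

open Classical in
/-- Under `ColorClassesMaxDegreeLeOne G col` (and `c ∈ col v`), the connected component of `v`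
in the subgraph induced by the colour class of `c`. -/
noncomputable def colorBlock (G : SimpleGraph V) (col : V → Finset κ) (c : κ) (v : V) :
    Finset V :=
  {x | c ∈ col x ∧ (x = v ∨ G.Adj v x)}

open Classical in
noncomputable def colorBlocks (G : SimpleGraph V) (col : V → Finset κ) (c : κ) :
    Finset (Finset V) :=
  ({v | c ∈ col v} : Finset V).image (colorBlock G col c)

theorem mem_colorBlock : x ∈ colorBlock G col c v ↔ c ∈ col x ∧ (x = v ∨ G.Adj v x) := by
  simp [colorBlock]

theorem mem_colorBlocks {s : Finset V} :
    s ∈ colorBlocks G col c ↔ ∃ v, c ∈ col v ∧ colorBlock G col c v = s := by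
  simp [colorBlocks]

theorem exists_mem_colorBlocks_iff : (∃ s ∈ colorBlocks G col c, v ∈ s) ↔ c ∈ col v := by
  constructor
  · rintro ⟨s, hs, hv⟩
    obtain ⟨w, -, rfl⟩ := mem_colorBlocks.mp hs
    exact (mem_colorBlock.mp hv).1
  · exact fun hc => ⟨_, mem_colorBlocks.mpr ⟨v, hc, rfl⟩, mem_colorBlock.mpr ⟨hc, .inl rfl⟩⟩

variable (hcol : ColorClassesMaxDegreeLeOne G col)
include hcol

theorem ColorClassesMaxDegreeLeOne.colorBlock_eq (hc : c ∈ col v)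
    (hx : x ∈ colorBlock G col c v) : colorBlock G col c x = colorBlock G col c v := by
  obtain ⟨hcx, rfl | hvx⟩ := mem_colorBlock.mp hx
  · rfl
  ext y
  simp only [mem_colorBlock]
  constructor
  · rintro ⟨hcy, rfl | hxy⟩
    · exact ⟨hcy, .inr hvx⟩
    · exact ⟨hcy, .inl (hcol hcx hxy hvx.symm hcy hc)⟩
  · rintro ⟨hcy, rfl | hvy⟩
    · exact ⟨hcy, .inr hvx.symm⟩
    · exact ⟨hcy, .inl (hcol hc hvy hvx hcy hcx)⟩

theorem ColorClassesMaxDegreeLeOne.colorBlock_subset_pair (hc : c ∈ col v) {u : V}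
    (hu : G.Adj v u) : ∃ w, G.Adj v w ∧ colorBlock G col c v ⊆ {v, w} := by
  by_cases hw : ∃ w ∈ colorBlock G col c v, G.Adj v w
  · obtain ⟨w, hw, hvw⟩ := hw
    refine ⟨w, hvw, fun y hy => ?_⟩
    obtain ⟨hcy, rfl | hvy⟩ := mem_colorBlock.mp hy
    · simp
    · simp [hcol hc hvy hvw hcy (mem_colorBlock.mp hw).1]
  · refine ⟨u, hu, fun y hy => ?_⟩
    obtain ⟨hcy, rfl | hvy⟩ := mem_colorBlock.mp hy
    · simp
    · exact absurd ⟨y, hy, hvy⟩ hw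

theorem ColorClassesMaxDegreeLeOne.mixedStableSet_colorBlocks (hnbr : ∀ v, ∃ u, G.Adj v u)
    (c : κ) :
    MixedStableSet G {s : Finset V | ∃ u v, G.Adj u v ∧ s = {u, v}} (colorBlocks G col c) := by
  refine ⟨fun s hs => ?_, fun s hs t ht hst => ?_, fun s hs t ht hst x hx y hy hxy => ?_⟩
  · obtain ⟨v, hc, rfl⟩ := mem_colorBlocks.mp hs
    obtain ⟨u, hu⟩ := hnbr v
    obtain ⟨w, hw, hsub⟩ := hcol.colorBlock_subset_pair hc hu
    exact ⟨{v, w}, ⟨v, w, hw, rfl⟩, hsub⟩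
  · obtain ⟨v, hv, rfl⟩ := mem_colorBlocks.mp hs
    obtain ⟨w, hw, rfl⟩ := mem_colorBlocks.mp ht
    refine Finset.disjoint_left.mpr fun x hxv hxw => hst ?_
    rw [← hcol.colorBlock_eq hv hxv, hcol.colorBlock_eq hw hxw]
  · obtain ⟨v, hv, rfl⟩ := mem_colorBlocks.mp hs
    obtain ⟨w, hw, rfl⟩ := mem_colorBlocks.mp ht
    have hyv : y ∈ colorBlock G col c x :=
      mem_colorBlock.mpr ⟨(mem_colorBlock.mp hy).1, .inr hxy⟩
    rw [hcol.colorBlock_eq hv hx] at hyv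
    exact hst (by rw [← hcol.colorBlock_eq hv hyv, hcol.colorBlock_eq hw hy])

theorem ColorClassesMaxDegreeLeOne.exists_isFractionalMixedCover (hnbr : ∀ v, ∃ u, G.Adj v u)
    {C : Finset κ} (hC : ∀ v, col v ⊆ C) {b : ℕ} (hb : b ≠ 0) (hcard : ∀ v, #(col v) = b) :
    ∃ y, IsFractionalMixedCover G {s : Finset V | ∃ u v, G.Adj u v ∧ s = {u, v}} y ∧
      ∑ M, y M = #C / b := by
  classical
  refine ⟨fun M => #{c ∈ C | colorBlocks G col c = M} / b, ⟨fun M => by positivity,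
    fun M hM => ?_, fun v => ?_⟩, ?_⟩
  · obtain ⟨c, hc⟩ : {c ∈ C | colorBlocks G col c = M}.Nonempty :=
      nonempty_iff_ne_empty.mpr fun h => hM (by simp [h])
    rw [← (mem_filter.mp hc).2]
    exact hcol.mixedStableSet_colorBlocks hnbr c
  · rw [sum_card_fiber_div_mul]
    simp only [exists_mem_colorBlocks_iff, sum_boole, filter_mem_eq_inter,
      inter_eq_right.mpr (hC v), hcard]
    rw [div_self (by exact_mod_cast hb)]
  · simpa using sum_card_fiber_div_mul C (colorBlocks G col) (b : ℚ) (fun _ => 1)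

end MixedCover

section RootedTree

variable {V : Type*} {G : SimpleGraph V} {r u v : V}

theorem IsAcyclic.eq_penultimate_of_adj_of_dist_add_one (hG : G.IsAcyclic) {p : G.Walk r v}
    (hp : p.length = G.dist r v) (hadj : G.Adj v u) (hu : G.dist r u + 1 = G.dist r v) :
    u = p.penultimate := by
  classical
  have hpath := p.isPath_of_length_eq_dist hp
  obtain ⟨q, hq, hql⟩ :=
    ((Reachable.of_dist_ne_zero (u := r) (by omega)).trans hadj.reachable).exists_path_of_dist
  have hv : v ∉ q.support := fun hv => by
    have := (dist_le (q.takeUntil v hv)).trans (q.length_takeUntil_le_length hv)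
    omega
  exact hG.eq_penultimate_of_adj_end hpath hadj
    (hG.mem_support_of_ne_mem_support_of_adj_of_isPath hpath hq hadj hv)

open Classical in
/-- The neighbour of `v` one step closer to `r`; `v` itself if there is none, as at `r`. -/
noncomputable def parent (G : SimpleGraph V) (r v : V) : V :=
  if h : ∃ u, G.Adj v u ∧ G.dist r u + 1 = G.dist r v then h.choose else v

theorem parent_spec (h : ∃ u, G.Adj v u ∧ G.dist r u + 1 = G.dist r v) :
    G.Adj v (G.parent r v) ∧ G.dist r (G.parent r v) + 1 = G.dist r v := by
  rw [parent, dif_pos h]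
  exact h.choose_spec

theorem IsAcyclic.parent_eq (hG : G.IsAcyclic) (hadj : G.Adj v u)
    (hu : G.dist r u + 1 = G.dist r v) : G.parent r v = u := by
  obtain ⟨p, hp⟩ := exists_walk_of_dist_ne_zero (show G.dist r v ≠ 0 by omega)
  have hparent := parent_spec ⟨u, hadj, hu⟩
  rw [hG.eq_penultimate_of_adj_of_dist_add_one hp hadj hu]
  exact hG.eq_penultimate_of_adj_of_dist_add_one hp hparent.1 hparent.2

theorem IsTree.adj_parent (hG : G.IsTree) (hv : v ≠ r) :
    G.Adj v (G.parent r v) ∧ G.dist r (G.parent r v) + 1 = G.dist r v := by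
  refine parent_spec ?_
  obtain ⟨p, hp⟩ := hG.connected.exists_walk_length_eq_dist r v
  have hnil : ¬p.Nil := Walk.not_nil_of_ne hv.symm
  have hadj := p.adj_penultimate hnil
  have hpos := Walk.not_nil_iff_lt_length.mp hnil
  have hlen : G.dist r p.penultimate ≤ p.length - 1 :=
    (dist_le p.dropLast).trans_eq p.length_dropLast
  refine ⟨p.penultimate, hadj.symm, ?_⟩
  have := hG.dist_eq_dist_add_one_of_adj r hadj
  omega

theorem IsTree.parent_eq_or_parent_eq_of_adj (hG : G.IsTree) (h : G.Adj u v) :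
    (u ≠ r ∧ G.parent r u = v) ∨ (v ≠ r ∧ G.parent r v = u) := by
  rcases hG.dist_eq_dist_add_one_of_adj r h with huv | hvu
  · exact .inl ⟨by rintro rfl; simp at huv, hG.isAcyclic.parent_eq h huv.symm⟩
  · exact .inr ⟨by rintro rfl; simp at hvu, hG.isAcyclic.parent_eq h.symm hvu.symm⟩

variable [Fintype V]

open Classical in
noncomputable def children (G : SimpleGraph V) (r u : V) : Finset V :=
  {w | w ≠ r ∧ G.parent r w = u}

theorem mem_children : v ∈ G.children r u ↔ v ≠ r ∧ G.parent r v = u := by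
  simp [children]

theorem IsTree.coe_children_subset (hG : G.IsTree) : ↑(G.children r u) ⊆ G.neighborSet u := by
  intro w hw
  obtain ⟨hwr, rfl⟩ := mem_children.mp hw
  exact (hG.adj_parent hwr).1.symm

theorem IsTree.card_children_le (hG : G.IsTree) (u : V) :
    #(G.children r u) ≤ (G.neighborSet u).ncard := by
  rw [← Set.ncard_coe_finset]
  exact Set.ncard_le_ncard hG.coe_children_subset

theorem IsTree.card_children_lt (hG : G.IsTree) (hu : u ≠ r) :
    #(G.children r u) < (G.neighborSet u).ncard := by
  rw [← Set.ncard_coe_finset]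
  refine Set.ncard_lt_ncard (Set.ssubset_iff_of_subset hG.coe_children_subset |>.mpr ?_)
  obtain ⟨hadj, hdist⟩ := hG.adj_parent hu
  refine ⟨G.parent r u, hadj, fun hmem => ?_⟩
  obtain ⟨hp, hpp⟩ := mem_children.mp hmem
  have := (hG.adj_parent hp).2
  rw [hpp] at this
  omega

section TreeColoring

variable (G) (r) (Δ : ℕ)

/-- The colours of `v`, and those among them reserved for the children of `v`. In a tree the
guard holds exactly when `v ≠ r`. -/
noncomputable def treeColorPair (v : V) : Finset ℕ × Finset ℕ :=
  if G.dist r (G.parent r v) < G.dist r v then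
    let p := treeColorPair (G.parent r v)
    (insert ((G.children r (G.parent r v)).injInto p.2 v) (range (2 * Δ - 1) \ p.1),
      range (2 * Δ - 1) \ p.1)
  else (range Δ, range Δ)
termination_by G.dist r v

noncomputable def treeColoring (v : V) : Finset ℕ := (treeColorPair G r Δ v).1

noncomputable def spareColors (v : V) : Finset ℕ := (treeColorPair G r Δ v).2

/-- The colour that `v` shares with its parent. -/
noncomputable def parentColor (v : V) : ℕ :=
  (G.children r (G.parent r v)).injInto (spareColors G r Δ (G.parent r v)) v

variable {G r Δ}

theorem treeColorPair_root : treeColorPair G r Δ r = (range Δ, range Δ) := by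
  rw [treeColorPair, if_neg (by simp)]

theorem IsTree.treeColorPair_of_ne (hG : G.IsTree) (hv : v ≠ r) :
    treeColorPair G r Δ v =
      (insert (parentColor G r Δ v) (range (2 * Δ - 1) \ treeColoring G r Δ (G.parent r v)),
        range (2 * Δ - 1) \ treeColoring G r Δ (G.parent r v)) := by
  rw [treeColorPair, if_pos (by have := (hG.adj_parent hv).2; omega)]
  rfl

theorem IsTree.treeColoring_of_ne (hG : G.IsTree) (hv : v ≠ r) :
    treeColoring G r Δ v =
      insert (parentColor G r Δ v) (range (2 * Δ - 1) \ treeColoring G r Δ (G.parent r v)) := by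
  rw [treeColoring, hG.treeColorPair_of_ne hv]

theorem IsTree.spareColors_of_ne (hG : G.IsTree) (hv : v ≠ r) :
    spareColors G r Δ v = range (2 * Δ - 1) \ treeColoring G r Δ (G.parent r v) := by
  rw [spareColors, hG.treeColorPair_of_ne hv]

theorem IsTree.treeColoring_spec (hG : G.IsTree) (hdeg : ∀ v, (G.neighborSet v).ncard ≤ Δ)
    (v : V) :
    treeColoring G r Δ v ⊆ range (2 * Δ - 1) ∧ #(treeColoring G r Δ v) = Δ ∧
      spareColors G r Δ v ⊆ treeColoring G r Δ v ∧
      #(G.children r v) ≤ #(spareColors G r Δ v) := by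
  by_cases hv : v = r
  · subst hv
    simp only [treeColoring, spareColors, treeColorPair_root, card_range, subset_refl, true_and]
    exact ⟨range_subset_range.mpr (by omega), (hG.card_children_le v).trans (hdeg v)⟩
  have hlt := (hG.card_children_lt hv).trans_le (hdeg v)
  obtain ⟨hsub, hcard, hspare, hchildren⟩ := hG.treeColoring_spec hdeg (G.parent r v)
  have hup : parentColor G r Δ v ∈ treeColoring G r Δ (G.parent r v) :=
    hspare (injInto_mem hchildren (mem_children.mpr ⟨hv, rfl⟩))
  have hcompl : #(range (2 * Δ - 1) \ treeColoring G r Δ (G.parent r v)) = Δ - 1 := by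
    rw [card_sdiff_of_subset hsub, card_range, hcard]
    omega
  rw [hG.treeColoring_of_ne hv, hG.spareColors_of_ne hv, card_insert_of_notMem (by simp [hup]),
    hcompl]
  exact ⟨insert_subset (hsub hup) sdiff_subset, by omega, subset_insert _ _, by omega⟩
termination_by G.dist r v
decreasing_by have := (hG.adj_parent hv).2; omega

section BoundedDegree

variable (hG : G.IsTree) (hdeg : ∀ v, (G.neighborSet v).ncard ≤ Δ)
include hG hdeg

theorem IsTree.injOn_parentColor (u : V) : Set.InjOn (parentColor G r Δ) (G.children r u) := by
  intro w₁ hw₁ w₂ hw₂ h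
  rw [parentColor, parentColor, (mem_children.mp hw₁).2, (mem_children.mp hw₂).2] at h
  exact injOn_injInto (hG.treeColoring_spec hdeg u).2.2.2 hw₁ hw₂ h

theorem IsTree.parentColor_mem_spareColors_parent (hv : v ≠ r) :
    parentColor G r Δ v ∈ spareColors G r Δ (G.parent r v) :=
  injInto_mem (hG.treeColoring_spec hdeg _).2.2.2 (mem_children.mpr ⟨hv, rfl⟩)

theorem IsTree.parentColor_notMem_spareColors (hv : v ≠ r) :
    parentColor G r Δ v ∉ spareColors G r Δ v := by
  rw [hG.spareColors_of_ne hv, mem_sdiff, not_and, not_not]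
  exact fun _ =>
    (hG.treeColoring_spec hdeg _).2.2.1 (hG.parentColor_mem_spareColors_parent hdeg hv)

end BoundedDegree

theorem IsTree.eq_parentColor_of_mem_parent (hG : G.IsTree) {c : ℕ} (hv : v ≠ r)
    (hc : c ∈ treeColoring G r Δ v) (hcp : c ∈ treeColoring G r Δ (G.parent r v)) :
    c = parentColor G r Δ v := by
  rw [hG.treeColoring_of_ne hv] at hc
  simpa [hcp] using hc

theorem IsTree.eq_parentColor_of_adj (hG : G.IsTree) {c : ℕ} (hadj : G.Adj v u)
    (hv : c ∈ treeColoring G r Δ v) (hu : c ∈ treeColoring G r Δ u) :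
    (v ≠ r ∧ G.parent r v = u ∧ c = parentColor G r Δ v) ∨
      (u ≠ r ∧ G.parent r u = v ∧ c = parentColor G r Δ u) := by
  rcases hG.parent_eq_or_parent_eq_of_adj (r := r) hadj with ⟨hvr, rfl⟩ | ⟨hur, rfl⟩
  · exact .inl ⟨hvr, rfl, hG.eq_parentColor_of_mem_parent hvr hv hu⟩
  · exact .inr ⟨hur, rfl, hG.eq_parentColor_of_mem_parent hur hu hv⟩

theorem IsTree.colorClassesMaxDegreeLeOne_treeColoring (hG : G.IsTree)
    (hdeg : ∀ v, (G.neighborSet v).ncard ≤ Δ) :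
    ColorClassesMaxDegreeLeOne G (treeColoring G r Δ) := by
  have not_parent_and_child {c v u₂} (hv : v ≠ r) (hc₁ : c = parentColor G r Δ v)
      (hu₂ : u₂ ≠ r) (hp₂ : G.parent r u₂ = v) (hc₂ : c = parentColor G r Δ u₂) : False := by
    have := hG.parentColor_mem_spareColors_parent hdeg hu₂
    rw [hp₂, ← hc₂, hc₁] at this
    exact hG.parentColor_notMem_spareColors hdeg hv this
  intro c v u₁ u₂ hc h₁ h₂ hc₁ hc₂
  rcases hG.eq_parentColor_of_adj h₁ hc hc₁ with ⟨hv, hp₁, hc₁⟩ | ⟨hu₁, hp₁, hc₁⟩ <;>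
    rcases hG.eq_parentColor_of_adj h₂ hc hc₂ with ⟨hv', hp₂, hc₂⟩ | ⟨hu₂, hp₂, hc₂⟩
  · exact hp₁.symm.trans hp₂
  · exact (not_parent_and_child hv hc₁ hu₂ hp₂ hc₂).elim
  · exact (not_parent_and_child hv' hc₂ hu₁ hp₁ hc₁).elim
  · exact hG.injOn_parentColor hdeg v (mem_children.mpr ⟨hu₁, hp₁⟩)
      (mem_children.mpr ⟨hu₂, hp₂⟩) (hc₁.symm.trans hc₂)

end TreeColoring

end RootedTree

end SimpleGraph

theorem tree_fracMixedChromatic_le_general {V : Type*} [Fintype V] [DecidableEq V]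
    (H : SimpleGraph V) (htree : H.IsTree) (hedge : ∃ u v, H.Adj u v)
    (Δ : ℕ)
    (hdegle : ∀ v, (H.neighborSet v).ncard ≤ Δ) :
    ∃ y : Finset (Finset V) → ℚ,
      (∀ M, 0 ≤ y M) ∧
      (∀ M, y M ≠ 0 →
        MixedStableSet H {s : Finset V | ∃ u v, H.Adj u v ∧ s = {u, v}} M) ∧
      (∀ v : V,
        (1 : ℚ) ≤ ∑ M : Finset (Finset V), y M * (if ∃ s ∈ M, v ∈ s then 1 else 0)) ∧
      (∑ M : Finset (Finset V), y M) ≤ (2 * (Δ : ℚ) - 1) / (Δ : ℚ) := by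
  obtain ⟨a, b, hab⟩ := hedge
  have hΔ : Δ ≠ 0 := (((Set.ncard_pos (Set.toFinite _)).mpr ⟨b, hab⟩).trans_le (hdegle a)).ne'
  have hnbr : ∀ v, ∃ u, H.Adj v u := fun v => by
    by_cases hva : v = a
    · exact ⟨b, hva ▸ hab⟩
    · exact (htree.connected v a).nonempty_neighborSet_left hva
  have hspec := htree.treeColoring_spec (r := a) hdegle
  obtain ⟨y, ⟨hy₀, hyM, hycov⟩, hsum⟩ :=
    (htree.colorClassesMaxDegreeLeOne_treeColoring hdegle).exists_isFractionalMixedCover hnbr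
      (fun v => (hspec v).1) hΔ (fun v => (hspec v).2.1)
  refine ⟨y, hy₀, hyM, hycov, le_of_eq ?_⟩
  rw [hsum, card_range, Nat.cast_sub (by omega)]
  push_cast
  rfl

/-- **Corollary (fractional mixed chromatic number of trees).** Let `H` be a tree with at
least one edge and maximum degree `Δ`.  Then `η^E(H) ≤ (2Δ - 1)/Δ`: there is a feasible
fractional cover `y` of the vertices by mixed stable sets subordinate to the edge set of
`H` (edges viewed as 2-element vertex sets) with total weight at most `(2Δ - 1)/Δ`. -/
theorem tree_fracMixedChromatic_le {V : Type*} [Fintype V] [DecidableEq V]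
    (H : SimpleGraph V) (htree : H.IsTree) (hedge : ∃ u v, H.Adj u v)
    (Δ : ℕ)
    (hdegle : ∀ v, (H.neighborSet v).ncard ≤ Δ)
    (hdegeq : ∃ v, (H.neighborSet v).ncard = Δ) :
    ∃ y : Finset (Finset V) → ℚ,
      (∀ M, 0 ≤ y M) ∧
      (∀ M, y M ≠ 0 →
        MixedStableSet H {s : Finset V | ∃ u v, H.Adj u v ∧ s = {u, v}} M) ∧
      (∀ v : V,
        (1 : ℚ) ≤ ∑ M : Finset (Finset V), y M * (if ∃ s ∈ M, v ∈ s then 1 else 0)) ∧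
      (∑ M : Finset (Finset V), y M) ≤ (2 * (Δ : ℚ) - 1) / (Δ : ℚ) :=
  tree_fracMixedChromatic_le_general H htree hedge Δ hdegle
end

section
/- Consider a packing integer program (P), a partition J = {J_1,…,J_q} of the column index set [n], and the packing interaction graph G^{pack}_{A,J} = (V,E). Let M be a collection of pairwise disjoint subsets of V such that no edge of G^{pack}_{A,J} has endpoints in two distinct sets of M. For each M ∈ M, let x^{(M)} be any point of P all of whose coordinates outside ∪_{v_j∈M} J_j are zero. Then the point Σ_{M∈M} x^{(M)} belongs to P (and hence to P^I); consequently z^I ≥ Σ_{M∈M} c^T x^{(M)}. -/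
open Finset

/-!
Distinct members of `ℳ` are disjoint and have no packing edge between them, so no row of `A`
meets the supports of two different `x M`. Hence in every row at most one summand of
`Σ_M A (x M)` is nonzero, and that row of the sum is bounded by `b` exactly as it is for the
single feasible point `x M`. Nonnegativity and integrality are preserved by sums.
-/

lemma Finset.sum_le_of_forall_le_of_ne_zero_unique {ι α : Type*} [AddCommMonoid α] [Preorder α]
    {s : Finset ι} {f : ι → α} {b : α} (hf : ∀ a ∈ s, f a ≤ b) (hb : 0 ≤ b)
    (huniq : ∀ a ∈ s, ∀ a' ∈ s, f a ≠ 0 → f a' ≠ 0 → a = a') :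
    ∑ a ∈ s, f a ≤ b := by
  by_cases h : ∃ a ∈ s, f a ≠ 0
  · obtain ⟨a, ha, hfa⟩ := h
    rw [sum_eq_single_of_mem a ha fun a' ha' hne =>
      not_not.mp fun hfa' => hne (huniq a ha a' ha' hfa hfa').symm]
    exact hf a ha
  · push Not at h
    rw [sum_eq_zero h]
    exact hb

lemma exists_intCast_sum_eq {ι R : Type*} [Ring R] {s : Finset ι} {f : ι → R}
    (h : ∀ a ∈ s, ∃ z : ℤ, f a = z) : ∃ z : ℤ, ∑ a ∈ s, f a = z := by
  simpa only [RingHom.mem_range, eq_comm, eq_intCast] using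
    Subring.sum_mem (Int.castRingHom R).range fun a ha => by
      simpa only [RingHom.mem_range, eq_comm, eq_intCast] using h a ha

lemma sum_mul_sum_swap {ι κ R : Type*} [Fintype ι] [NonUnitalNonAssocSemiring R]
    (a : ι → R) (s : Finset κ) (x : κ → ι → R) :
    ∑ j, a j * ∑ M ∈ s, x M j = ∑ M ∈ s, ∑ j, a j * x M j := by
  simp only [mul_sum]
  exact sum_comm

lemma dotp_sum {n : ℕ} {κ : Type*} (c : Fin n → ℚ) (s : Finset κ) (x : κ → Fin n → ℚ) :
    dotp c (fun j => ∑ M ∈ s, x M j) = ∑ M ∈ s, dotp c (x M) :=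
  sum_mul_sum_swap c s x

section Packing

variable {m n q : ℕ} {A : Matrix (Fin m) (Fin n) ℚ} {b : Fin m → ℚ} {L : Finset (Fin n)}

lemma sum_mem_mipSet {κ : Type*} (hb : ∀ i, 0 ≤ b i) {ℳ : Finset κ} {x : κ → Fin n → ℚ}
    (hxP : ∀ M ∈ ℳ, x M ∈ mipSet A b L)
    (hrow : ∀ i, ∀ M ∈ ℳ, ∀ M' ∈ ℳ,
      ∑ j, A i j * x M j ≠ 0 → ∑ j, A i j * x M' j ≠ 0 → M = M') :
    (fun j => ∑ M ∈ ℳ, x M j) ∈ mipSet A b L := by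
  refine ⟨fun i => ?_, fun j => sum_nonneg fun M hM => (hxP M hM).2.1 j,
    fun j hj => exists_intCast_sum_eq fun M hM => (hxP M hM).2.2 j hj⟩
  rw [sum_mul_sum_swap]
  exact sum_le_of_forall_le_of_ne_zero_unique (fun M hM => (hxP M hM).1 i) (hb i) (hrow i)

lemma exists_ne_zero_of_rowSum_ne_zero {π : Fin n → Fin q} {s : Finset (Fin q)}
    {y : Fin n → ℚ} (hy : ∀ j, π j ∉ s → y j = 0) {i : Fin m}
    (hi : ∑ j, A i j * y j ≠ 0) : ∃ j, π j ∈ s ∧ A i j ≠ 0 := by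
  obtain ⟨j, -, hj⟩ := exists_ne_zero_of_sum_ne_zero hi
  exact ⟨j, not_not.mp fun hjs => right_ne_zero_of_mul hj (hy j hjs),
    left_ne_zero_of_mul hj⟩

lemma rowSum_eq_zero_of_not_packGraph_adj {π : Fin n → Fin q} {s t : Finset (Fin q)}
    (hst : Disjoint s t) (hnoedge : ∀ u ∈ s, ∀ v ∈ t, ¬ (packGraph A π).Adj u v)
    {y z : Fin n → ℚ} (hy : ∀ j, π j ∉ s → y j = 0) (hz : ∀ j, π j ∉ t → z j = 0)
    {i : Fin m} (hyi : ∑ j, A i j * y j ≠ 0) : ∑ j, A i j * z j = 0 := by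
  by_contra hzi
  obtain ⟨j, hjs, hAj⟩ := exists_ne_zero_of_rowSum_ne_zero hy hyi
  obtain ⟨j', hjt, hAj'⟩ := exists_ne_zero_of_rowSum_ne_zero hz hzi
  exact hnoedge _ hjs _ hjt
    ⟨fun h => disjoint_left.mp hst hjs (h ▸ hjt), i, j, j', rfl, rfl, hAj, hAj'⟩

end Packing

theorem packing_sum_over_mixedStableSet_feasible_general
    {m n q : ℕ}
    (A : Matrix (Fin m) (Fin n) ℚ) (b : Fin m → ℚ) (c : Fin n → ℚ) (L : Finset (Fin n))
    (hb : ∀ i, 0 ≤ b i)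
    (π : Fin n → Fin q)
    (ℳ : Finset (Finset (Fin q)))
    (hdisj : ∀ s ∈ ℳ, ∀ t ∈ ℳ, s ≠ t → Disjoint s t)
    (hnoedge : ∀ s ∈ ℳ, ∀ t ∈ ℳ, s ≠ t → ∀ u ∈ s, ∀ v ∈ t, ¬ (packGraph A π).Adj u v)
    (x : Finset (Fin q) → (Fin n → ℚ))
    (hxP : ∀ M ∈ ℳ, x M ∈ mipSet A b L)
    (hxsupp : ∀ M ∈ ℳ, ∀ j : Fin n, π j ∉ M → x M j = 0)
    (xI : Fin n → ℚ)
    (hxImax : ∀ z ∈ intHull A b L, dotp c z ≤ dotp c xI) :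
    (fun j => ∑ M ∈ ℳ, x M j) ∈ mipSet A b L ∧
    ∑ M ∈ ℳ, dotp c (x M) ≤ dotp c xI := by
  have hmem : (fun j => ∑ M ∈ ℳ, x M j) ∈ mipSet A b L :=
    sum_mem_mipSet hb hxP fun i M hM M' hM' hMi hM'i => by
      by_contra hne
      exact hM'i (rowSum_eq_zero_of_not_packGraph_adj (hdisj M hM M' hM' hne)
        (hnoedge M hM M' hM' hne) (hxsupp M hM) (hxsupp M' hM') hMi)
  refine ⟨hmem, ?_⟩
  rw [← dotp_sum]
  exact hxImax _ (subset_convexHull ℚ _ hmem)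

/-- **Lemma (combining solutions along a mixed stable set).** For a packing integer program
and a column partition given by `π`, let `ℳ` be a collection of pairwise disjoint subsets
of the nodes of the packing interaction graph with no edge between distinct members, and
for each `M ∈ ℳ` let `x M` be a feasible point of `P` supported on the variables of the
blocks of `M`.  Then `Σ_{M ∈ ℳ} x M` is again feasible (hence in `P^I`), and consequently
`z^I ≥ Σ_{M ∈ ℳ} cᵀ (x M)`. -/
theorem packing_sum_over_mixedStableSet_feasible
    {m n q : ℕ}
    (A : Matrix (Fin m) (Fin n) ℚ) (b : Fin m → ℚ) (c : Fin n → ℚ) (L : Finset (Fin n))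
    (hA : ∀ i j, 0 ≤ A i j) (hb : ∀ i, 0 ≤ b i) (hc : ∀ j, 0 ≤ c j)
    (π : Fin n → Fin q) (hπ : Function.Surjective π)
    (ℳ : Finset (Finset (Fin q)))
    (hdisj : ∀ s ∈ ℳ, ∀ t ∈ ℳ, s ≠ t → Disjoint s t)
    (hnoedge : ∀ s ∈ ℳ, ∀ t ∈ ℳ, s ≠ t → ∀ u ∈ s, ∀ v ∈ t, ¬ (packGraph A π).Adj u v)
    (x : Finset (Fin q) → (Fin n → ℚ))
    (hxP : ∀ M ∈ ℳ, x M ∈ mipSet A b L)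
    (hxsupp : ∀ M ∈ ℳ, ∀ j : Fin n, π j ∉ M → x M j = 0)
    (xI : Fin n → ℚ) (hxI : xI ∈ intHull A b L)
    (hxImax : ∀ z ∈ intHull A b L, dotp c z ≤ dotp c xI) :
    (fun j => ∑ M ∈ ℳ, x M j) ∈ mipSet A b L ∧
    ∑ M ∈ ℳ, dotp c (x M) ≤ dotp c xI :=
  packing_sum_over_mixedStableSet_feasible_general A b c L hb π ℳ hdisj hnoedge x hxP hxsupp xI
    hxImax
end
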